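/- Suppose ρ_AB = Σ_a p_a |Ψ_a⟩⟨Ψ_a| is a separable density operator on ℂ^m ⊗ ℂ^n given by its spectral decomposition. Then Σ_a λ_1^{(a)} ≥ 1, where λ_1^{(a)} is the largest eigenvalue of ρ_A^{(a)} = Tr_B(|Ψ_a⟩⟨Ψ_a|). -/

import Mathlib

open Matrix BigOperators Kronecker
open scoped ComplexOrder

/-- The rank-one projector `|v⟩⟨v|`. -/
noncomputable def dyad {α : Type*} [Fintype α] (v : α → ℂ) : Matrix α α ℂ :=
  Matrix.vecMulVec v (star v)

/-- Partial trace over the second tensor factor. -/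
noncomputable def ptraceB {m n : ℕ} (ρ : Matrix (Fin m × Fin n) (Fin m × Fin n) ℂ) :
    Matrix (Fin m) (Fin m) ℂ := fun i j => ∑ k : Fin n, ρ (i, k) (j, k)

/-- Partial trace over the first tensor factor. -/
noncomputable def ptraceA {m n : ℕ} (ρ : Matrix (Fin m × Fin n) (Fin m × Fin n) ℂ) :
    Matrix (Fin n) (Fin n) ℂ := fun i j => ∑ k : Fin m, ρ (k, i) (k, j)

/-- A bipartite state is separable if it is a finite convex combination of
tensor products of density matrices. -/
def SepState {m n : ℕ} (ρ : Matrix (Fin m × Fin n) (Fin m × Fin n) ℂ) : Prop :=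
  ∃ (d : ℕ) (q : Fin d → ℝ) (σ : Fin d → Matrix (Fin m) (Fin m) ℂ)
    (τ : Fin d → Matrix (Fin n) (Fin n) ℂ),
    (∀ i, 0 ≤ q i) ∧ (∑ i, q i = 1) ∧
    (∀ i, (σ i).PosSemidef ∧ (σ i).trace = 1) ∧
    (∀ i, (τ i).PosSemidef ∧ (τ i).trace = 1) ∧
    ρ = ∑ i, (q i : ℂ) • (σ i ⊗ₖ τ i)

open Classical in
/-- Eigenvalues of a Hermitian matrix arranged in non-increasing order
(`eigsDesc A 0` is the largest eigenvalue); junk value otherwise. -/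
noncomputable def eigsDesc {k : ℕ} (A : Matrix (Fin k) (Fin k) ℂ) : Fin k → ℝ :=
  if h : A.IsHermitian then fun i => (h.eigenvalues ∘ Tuple.sort h.eigenvalues) i.rev
  else fun _ => 0

/-- The `i`-th largest singular value of an `m × n` complex matrix,
`i : Fin (min m n)`. -/
noncomputable def singVal {m n : ℕ} (A : Matrix (Fin m) (Fin n) ℂ) (i : Fin (min m n)) : ℝ :=
  Real.sqrt (eigsDesc (Aᴴ * A) (Fin.castLE (min_le_right m n) i))

open Classical in
/-- The largest eigenvalue of a Hermitian matrix; junk value otherwise. -/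
noncomputable def lamMax {α : Type*} [Fintype α] [DecidableEq α] (A : Matrix α α ℂ) : ℝ :=
  if h : A.IsHermitian then ⨆ i, h.eigenvalues i else 0

/-- Frobenius (Hilbert–Schmidt) norm of a matrix. -/
noncomputable def frobNorm {m n : ℕ} (A : Matrix (Fin m) (Fin n) ℂ) : ℝ :=
  Real.sqrt ((Aᴴ * A).trace.re)

/- ### Auxiliary lemmas -/

lemma kron_conjT {m n : ℕ} (A : Matrix (Fin m) (Fin m) ℂ) (B : Matrix (Fin n) (Fin n) ℂ) :
    (A ⊗ₖ B)ᴴ = Aᴴ ⊗ₖ Bᴴ := by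
  ext ⟨i, k⟩ ⟨j, l⟩
  simp [conjTranspose_apply, kroneckerMap_apply]

lemma psd_kron {m n : ℕ} {A : Matrix (Fin m) (Fin m) ℂ} {B : Matrix (Fin n) (Fin n) ℂ}
    (hA : A.PosSemidef) (hB : B.PosSemidef) : (A ⊗ₖ B).PosSemidef := by
  obtain ⟨P, rfl⟩ : ∃ P, A = Pᴴ * P := by
    open scoped MatrixOrder in
    obtain ⟨P, hP⟩ := CStarAlgebra.nonneg_iff_eq_star_mul_self.mp hA.nonneg
    exact ⟨P, hP⟩
  obtain ⟨Q, rfl⟩ : ∃ Q, B = Qᴴ * Q := by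
    open scoped MatrixOrder in
    obtain ⟨Q, hQ⟩ := CStarAlgebra.nonneg_iff_eq_star_mul_self.mp hB.nonneg
    exact ⟨Q, hQ⟩
  rw [mul_kronecker_mul, ← kron_conjT]
  exact posSemidef_conjTranspose_mul_self _

lemma kron_sub {m n : ℕ} (A : Matrix (Fin m) (Fin m) ℂ) (B C : Matrix (Fin n) (Fin n) ℂ) :
    A ⊗ₖ (B - C) = A ⊗ₖ B - A ⊗ₖ C := by
  ext ⟨i, k⟩ ⟨j, l⟩
  simp [kroneckerMap_apply, mul_sub]

lemma trace_eq_sum_eigs {k : ℕ} {A : Matrix (Fin k) (Fin k) ℂ} (hA : A.IsHermitian) :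
    A.trace = ((∑ i, hA.eigenvalues i : ℝ) : ℂ) := by
  conv_lhs => rw [hA.spectral_theorem, Unitary.conjStarAlgAut_apply]
  rw [trace_mul_cycle]
  rw [show (star (hA.eigenvectorUnitary : Matrix (Fin k) (Fin k) ℂ)) *
      (hA.eigenvectorUnitary : Matrix (Fin k) (Fin k) ℂ) = 1 from
    (Matrix.mem_unitaryGroup_iff').mp hA.eigenvectorUnitary.2]
  rw [one_mul, trace_diagonal]
  push_cast
  rfl

lemma psd_trace_nonneg {k : ℕ} {A : Matrix (Fin k) (Fin k) ℂ} (hA : A.PosSemidef) :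
    0 ≤ A.trace := by
  rw [trace_eq_sum_eigs hA.1]
  rw [Complex.le_def]
  constructor
  · simpa using Finset.sum_nonneg fun i _ => hA.eigenvalues_nonneg i
  · simp

lemma trace_mul_psd_nonneg {k : ℕ} {A B : Matrix (Fin k) (Fin k) ℂ}
    (hA : A.PosSemidef) (hB : B.PosSemidef) : 0 ≤ (A * B).trace := by
  obtain ⟨P, rfl⟩ : ∃ P, A = Pᴴ * P := by
    open scoped MatrixOrder in
    obtain ⟨P, hP⟩ := CStarAlgebra.nonneg_iff_eq_star_mul_self.mp hA.nonneg
    exact ⟨P, hP⟩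
  rw [mul_assoc, trace_mul_comm]
  exact psd_trace_nonneg (hB.mul_mul_conjTranspose_same P)

lemma le_eigsDesc_top {k : ℕ} {A : Matrix (Fin k) (Fin k) ℂ} (hA : A.IsHermitian)
    (hk : 0 < k) (i : Fin k) : hA.eigenvalues i ≤ eigsDesc A ⟨0, hk⟩ := by
  rw [eigsDesc, dif_pos hA]
  obtain ⟨j, hj⟩ := (Tuple.sort hA.eigenvalues).surjective i
  calc hA.eigenvalues i = (hA.eigenvalues ∘ Tuple.sort hA.eigenvalues) j := by
        simp [hj]
    _ ≤ (hA.eigenvalues ∘ Tuple.sort hA.eigenvalues) (Fin.rev ⟨0, hk⟩) := by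
        apply Tuple.monotone_sort
        rw [Fin.le_def]
        simp [Fin.rev]
        omega

lemma smul_one_sub_psd {k : ℕ} {A : Matrix (Fin k) (Fin k) ℂ} (hA : A.IsHermitian) {c : ℝ}
    (h : ∀ i, hA.eigenvalues i ≤ c) : ((c : ℂ) • 1 - A).PosSemidef := by
  have key : (c : ℂ) • 1 - A =
      (hA.eigenvectorUnitary : Matrix (Fin k) (Fin k) ℂ) *
        diagonal (fun i => ((c - hA.eigenvalues i : ℝ) : ℂ)) *
        (hA.eigenvectorUnitary : Matrix (Fin k) (Fin k) ℂ)ᴴ := by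
    have hd : diagonal (fun i => ((c - hA.eigenvalues i : ℝ) : ℂ)) =
        (c : ℂ) • 1 - diagonal (RCLike.ofReal ∘ hA.eigenvalues) := by
      ext i j
      rcases eq_or_ne i j with rfl | hij
      · simp [Complex.ofReal_sub]
      · simp [diagonal_apply_ne _ hij, Matrix.one_apply_ne hij]
    rw [hd, Matrix.mul_sub, Matrix.sub_mul, ← Matrix.star_eq_conjTranspose]
    conv_lhs => rw [hA.spectral_theorem, Unitary.conjStarAlgAut_apply]
    congr 1
    rw [Matrix.mul_smul, mul_one, Matrix.smul_mul,
      (Matrix.mem_unitaryGroup_iff).mp hA.eigenvectorUnitary.2]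
  rw [key]
  refine (posSemidef_diagonal_iff.mpr fun i => ?_).mul_mul_conjTranspose_same _
  rw [Complex.le_def]
  constructor
  · simpa using sub_nonneg.mpr (h i)
  · simp

lemma ptraceB_dyad_psd {m n : ℕ} (Ψ : Fin m × Fin n → ℂ) :
    (ptraceB (dyad Ψ)).PosSemidef := by
  have : ptraceB (dyad Ψ) =
      (Matrix.of fun i k => Ψ (i, k)) * (Matrix.of fun i k => Ψ (i, k))ᴴ := by
    ext i j
    simp [ptraceB, dyad, vecMulVec_apply, mul_apply, conjTranspose_apply]
  rw [this]
  exact posSemidef_self_mul_conjTranspose _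

lemma quad_kron_one {m n : ℕ} (Ψ : Fin m × Fin n → ℂ) (σ : Matrix (Fin m) (Fin m) ℂ) :
    star Ψ ⬝ᵥ ((σ ⊗ₖ (1 : Matrix (Fin n) (Fin n) ℂ)) *ᵥ Ψ) = (σ * ptraceB (dyad Ψ)).trace := by
  have lhs : star Ψ ⬝ᵥ ((σ ⊗ₖ (1 : Matrix (Fin n) (Fin n) ℂ)) *ᵥ Ψ) =
      ∑ i : Fin m, ∑ j : Fin m, ∑ k : Fin n, star (Ψ (i, k)) * σ i j * Ψ (j, k) := by
    simp only [dotProduct, mulVec, Fintype.sum_prod_type, Pi.star_apply, dotProduct,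
      kroneckerMap_apply, Matrix.one_apply, mul_ite, mul_one, mul_zero, ite_mul, zero_mul,
      Finset.sum_ite_eq', Finset.mem_univ, if_true]
    rw [Finset.sum_congr rfl fun i _ => Finset.sum_comm]
    simp only [Finset.mul_sum]
    congr 1; ext i; congr 1; ext j; congr 1; ext k
    simp only [mul_ite, mul_zero, Finset.sum_ite_eq, Finset.mem_univ, if_true]
    ring
  have rhs : (σ * ptraceB (dyad Ψ)).trace =
      ∑ i : Fin m, ∑ j : Fin m, ∑ k : Fin n, star (Ψ (i, k)) * σ i j * Ψ (j, k) := by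
    simp only [trace, mul_apply, diag_apply, ptraceB, dyad, vecMulVec_apply, Pi.star_apply,
      Finset.mul_sum]
    congr 1; ext i; congr 1; ext j; congr 1; ext k
    ring
  rw [lhs, rhs]

lemma sum_mulVec' {ι α : Type*} [Fintype α] (s : Finset ι) (A : ι → Matrix α α ℂ)
    (x : α → ℂ) : (∑ b ∈ s, A b) *ᵥ x = ∑ b ∈ s, A b *ᵥ x := by
  ext j
  simp only [mulVec, dotProduct, Finset.sum_apply, Matrix.sum_apply, Finset.sum_mul]
  exact Finset.sum_comm

lemma dotProduct_sum' {ι α : Type*} [Fintype α] (s : Finset ι) (u : α → ℂ)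
    (v : ι → (α → ℂ)) : u ⬝ᵥ (∑ b ∈ s, v b) = ∑ b ∈ s, u ⬝ᵥ v b := by
  simp only [dotProduct, Finset.sum_apply, Finset.mul_sum]
  exact Finset.sum_comm

/-- The central estimate: for density matrices `σ, τ`, the quadratic form of `σ ⊗ₖ τ`
at `Ψ` is at most the top eigenvalue of the reduced state of `Ψ`. -/
lemma key_bound {m n : ℕ} (hm : 0 < m) (Ψ : Fin m × Fin n → ℂ)
    (σ : Matrix (Fin m) (Fin m) ℂ) (τ : Matrix (Fin n) (Fin n) ℂ)
    (hσ : σ.PosSemidef) (hσt : σ.trace = 1) (hτ : τ.PosSemidef) (hτt : τ.trace = 1) :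
    star Ψ ⬝ᵥ ((σ ⊗ₖ τ) *ᵥ Ψ) ≤ ((eigsDesc (ptraceB (dyad Ψ)) ⟨0, hm⟩ : ℝ) : ℂ) := by
  have hMpsd := ptraceB_dyad_psd Ψ
  set M := ptraceB (dyad Ψ) with hM
  set c := eigsDesc M ⟨0, hm⟩ with hc
  have hle : ∀ i, hMpsd.1.eigenvalues i ≤ c := le_eigsDesc_top hMpsd.1 hm
  -- τ ≤ 1
  have hτsum : ∑ i, hτ.1.eigenvalues i = 1 := by
    have h := trace_eq_sum_eigs hτ.1
    rw [hτt] at h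
    exact_mod_cast h.symm
  have hτ1 : ((1 : Matrix (Fin n) (Fin n) ℂ) - τ).PosSemidef := by
    have := smul_one_sub_psd hτ.1 (c := 1) (fun i => by
      rw [← hτsum]
      exact Finset.single_le_sum (fun j _ => hτ.eigenvalues_nonneg j) (Finset.mem_univ i))
    simpa using this
  -- step 2
  have h2 : star Ψ ⬝ᵥ ((σ ⊗ₖ τ) *ᵥ Ψ) ≤ star Ψ ⬝ᵥ ((σ ⊗ₖ (1 : Matrix (Fin n) (Fin n) ℂ)) *ᵥ Ψ) := by
    have hp : (σ ⊗ₖ ((1 : Matrix (Fin n) (Fin n) ℂ) - τ)).PosSemidef := psd_kron hσ hτ1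
    have h0 := hp.dotProduct_mulVec_nonneg Ψ
    rw [kron_sub, Matrix.sub_mulVec, dotProduct_sub] at h0
    exact sub_nonneg.mp h0
  -- step 3 + 4
  have h4 : (σ * M).trace ≤ (c : ℂ) := by
    have hcM : ((c : ℂ) • 1 - M).PosSemidef := smul_one_sub_psd hMpsd.1 hle
    have h0 := trace_mul_psd_nonneg hσ hcM
    rw [Matrix.mul_sub, trace_sub, Matrix.mul_smul, mul_one, trace_smul, hσt,
      smul_eq_mul, mul_one] at h0
    exact sub_nonneg.mp h0
  calc star Ψ ⬝ᵥ ((σ ⊗ₖ τ) *ᵥ Ψ)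
      ≤ star Ψ ⬝ᵥ ((σ ⊗ₖ (1 : Matrix (Fin n) (Fin n) ℂ)) *ᵥ Ψ) := h2
    _ = (σ * M).trace := quad_kron_one Ψ σ
    _ ≤ (c : ℂ) := h4

/-- For a separable state given by its spectral decomposition, the largest eigenvalues
of the pure-state marginals sum to at least one. -/
theorem stmt7 (m n d : ℕ) (hm : 0 < m) (p : Fin d → ℝ)
    (Psi : Fin d → (Fin m × Fin n → ℂ))
    (hortho : ∀ a b, (∑ x, (starRingEnd ℂ) (Psi a x) * Psi b x) = if a = b then 1 else 0)
    (hp : ∀ a, 0 < p a) (hpsum : ∑ a, p a = 1)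
    (ρ : Matrix (Fin m × Fin n) (Fin m × Fin n) ℂ)
    (hρ : ρ = ∑ a, (p a : ℂ) • dyad (Psi a))
    (hsep : SepState ρ) :
    1 ≤ ∑ a, eigsDesc (ptraceB (dyad (Psi a))) ⟨0, hm⟩ := by
  obtain ⟨D, q, σ, τ, hq0, hq1, hσ, hτ, hrep⟩ := hsep
  have hdot : ∀ a b : Fin d, star (Psi a) ⬝ᵥ Psi b = if a = b then 1 else 0 := by
    intro a b
    simpa [dotProduct] using hortho a b
  -- ⟨Ψa| ρ |Ψa⟩ = p a
  have hpure : ∀ a, star (Psi a) ⬝ᵥ (ρ *ᵥ Psi a) = (p a : ℂ) := by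
    intro a
    rw [hρ, sum_mulVec', dotProduct_sum']
    have : ∀ b : Fin d,
        star (Psi a) ⬝ᵥ (((p b : ℂ) • dyad (Psi b)) *ᵥ Psi a) =
          if a = b then (p b : ℂ) else 0 := by
      intro b
      have hmv : dyad (Psi b) *ᵥ Psi a = (star (Psi b) ⬝ᵥ Psi a) • Psi b := by
        ext i
        simp only [dyad, mulVec, dotProduct, vecMulVec_apply, Pi.smul_apply, Pi.star_apply,
          smul_eq_mul, Finset.sum_mul, Finset.mul_sum]
        exact Finset.sum_congr rfl fun x _ => by ring
      rw [Matrix.smul_mulVec, hmv, hdot b a]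
      rcases eq_or_ne a b with rfl | hab
      · simp [hdot a a]
      · simp [if_neg (Ne.symm hab), hab]
    rw [Finset.sum_congr rfl fun b _ => this b]
    simp
  -- ⟨Ψa| ρ |Ψa⟩ ≤ c a
  have hbound : ∀ a, star (Psi a) ⬝ᵥ (ρ *ᵥ Psi a) ≤
      ((eigsDesc (ptraceB (dyad (Psi a))) ⟨0, hm⟩ : ℝ) : ℂ) := by
    intro a
    rw [hrep, sum_mulVec', dotProduct_sum']
    have step : ∀ i : Fin D,
        star (Psi a) ⬝ᵥ (((q i : ℂ) • (σ i ⊗ₖ τ i)) *ᵥ Psi a) ≤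
          (q i : ℂ) * ((eigsDesc (ptraceB (dyad (Psi a))) ⟨0, hm⟩ : ℝ) : ℂ) := by
      intro i
      rw [Matrix.smul_mulVec, dotProduct_smul, smul_eq_mul]
      apply mul_le_mul_of_nonneg_left
      · exact key_bound hm (Psi a) (σ i) (τ i) (hσ i).1 (hσ i).2 (hτ i).1 (hτ i).2
      · exact_mod_cast Complex.real_le_real.mpr (hq0 i) |>.trans_eq rfl
    calc (∑ i, star (Psi a) ⬝ᵥ (((q i : ℂ) • (σ i ⊗ₖ τ i)) *ᵥ Psi a))
        ≤ ∑ i, (q i : ℂ) * ((eigsDesc (ptraceB (dyad (Psi a))) ⟨0, hm⟩ : ℝ) : ℂ) :=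
          Finset.sum_le_sum fun i _ => step i
      _ = ((eigsDesc (ptraceB (dyad (Psi a))) ⟨0, hm⟩ : ℝ) : ℂ) := by
          rw [← Finset.sum_mul]
          norm_cast
          rw [hq1, one_mul]
    -- done
  have final : ((1 : ℝ) : ℂ) ≤ ((∑ a, eigsDesc (ptraceB (dyad (Psi a))) ⟨0, hm⟩ : ℝ) : ℂ) := by
    calc ((1 : ℝ) : ℂ) = ∑ a, (p a : ℂ) := by
          rw [← hpsum]; push_cast; ring
      _ = ∑ a, star (Psi a) ⬝ᵥ (ρ *ᵥ Psi a) := by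
          exact Finset.sum_congr rfl fun a _ => (hpure a).symm
      _ ≤ ∑ a, ((eigsDesc (ptraceB (dyad (Psi a))) ⟨0, hm⟩ : ℝ) : ℂ) :=
          Finset.sum_le_sum fun a _ => hbound a
      _ = ((∑ a, eigsDesc (ptraceB (dyad (Psi a))) ⟨0, hm⟩ : ℝ) : ℂ) := by push_cast; ring
  exact_mod_cast Complex.real_le_real.mp final
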